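/- Assume W is nonzero, and let m be an odd positive integer. Then: if c = a+b+1, then c is odd; if c + m = a+b, then c is even; and if c + m = a+b+1 with m >= 3, then c is even. -/

import Mathlib

open Polynomial

/-- `alpha l S` is the coefficient of `x^(deg S - l)` in `S`. -/
noncomputable def alpha (l : ℕ) (S : Polynomial (ZMod 2)) : ZMod 2 :=
  S.coeff (S.natDegree - l)

/-- `sigmaPow P n = 1 + P + ⋯ + P^n`, the sum of divisors of `P^n` for `P` irreducible. -/
noncomputable def sigmaPow (P : Polynomial (ZMod 2)) (n : ℕ) : Polynomial (ZMod 2) :=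
  ∑ i ∈ Finset.range (n + 1), P ^ i

/-!
Write `T = X^a (X+1)^b` and `D = 2h(a+b)`. Both `U = X^u (X+1)^v` (where
`u + v = deg σ(M^{2h})`) and `σ(M^{2h}) = Σ_j C(2h+1, j+1) T^j` are monic of degree `D`, and for
`l ≤ a+b` the coefficient of `X^(D-l)` in `W` is `C(v, l) + C(2hb, l) + [l = a+b]`. For odd `l`
both binomial coefficients are even by Lucas, since `v` and `2hb` are, so the coefficient is
`[l = a+b]`. The leading coefficient of
`W` sits at `X^(D-c)`, so `c < a+b` forces `c` even; if `c = a+b+1`, the coefficient at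
`X^(D-(a+b))` lies above the degree and vanishes, so `a+b` is even and `c` is odd.
-/

open Finset

theorem Nat.even_choose_of_even_of_odd {n l : ℕ} (hn : Even n) (hl : Odd l) :
    Even (n.choose l) := by
  have lucas := Choose.choose_modEq_choose_mod_mul_choose_div_nat (p := 2) (n := n) (k := l)
  rw [Nat.even_iff.mp hn, Nat.odd_iff.mp hl, Nat.choose_zero_succ, zero_mul] at lucas
  exact Nat.even_iff.mpr lucas

section XPowMulXAddOnePow

variable {R : Type*} [CommSemiring R]

theorem coeff_X_pow_mul_X_add_one_pow_add_sub (n k l : ℕ) (hl : l ≤ n + k) :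
    ((X : R[X]) ^ n * (X + 1) ^ k).coeff (n + k - l) = (k.choose l : R) := by
  rw [mul_comm, coeff_mul_X_pow', coeff_X_add_one_pow]
  by_cases hlk : l ≤ k
  · rw [if_pos (by omega), show n + k - l - n = k - l by omega, Nat.choose_symm hlk]
  · rw [if_neg (by omega), Nat.choose_eq_zero_of_lt (by omega), Nat.cast_zero]

theorem monic_X_pow_mul_X_add_one_pow (n k : ℕ) : ((X : R[X]) ^ n * (X + 1) ^ k).Monic := by
  simpa using (monic_X_pow n).mul ((monic_X_add_C (1 : R)).pow k)

theorem Polynomial.Monic.one_add {T : R[X]} (hT : T.Monic) (hpos : 0 < T.natDegree) :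
    (1 + T).Monic ∧ (1 + T).natDegree = T.natDegree := by
  have hlt : (1 : R[X]).natDegree < T.natDegree := by rwa [natDegree_one]
  exact ⟨hT.add_of_right (degree_lt_degree hlt), natDegree_add_eq_right_of_natDegree_lt hlt⟩

variable [Nontrivial R]

theorem natDegree_X_pow_mul_X_add_one_pow (n k : ℕ) :
    ((X : R[X]) ^ n * (X + 1) ^ k).natDegree = n + k := by
  have hX1 : ((X : R[X]) + 1).Monic := by simpa using monic_X_add_C (1 : R)
  rw [(monic_X_pow n).natDegree_mul (hX1.pow k), natDegree_X_pow, hX1.natDegree_pow,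
    show (X + 1 : R[X]) = X + C 1 by simp, natDegree_X_add_C, mul_one]

theorem monic_one_add_X_pow_mul_X_add_one_pow {n k : ℕ} (hnk : 0 < n + k) :
    (1 + (X : R[X]) ^ n * (X + 1) ^ k).Monic :=
  ((monic_X_pow_mul_X_add_one_pow n k).one_add
    (by rwa [natDegree_X_pow_mul_X_add_one_pow])).1

theorem natDegree_one_add_X_pow_mul_X_add_one_pow {n k : ℕ} (hnk : 0 < n + k) :
    (1 + (X : R[X]) ^ n * (X + 1) ^ k).natDegree = n + k := by
  rw [((monic_X_pow_mul_X_add_one_pow n k).one_add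
    (by rwa [natDegree_X_pow_mul_X_add_one_pow])).2, natDegree_X_pow_mul_X_add_one_pow]

theorem natDegree_prod_one_add_X_pow_mul_X_add_one_pow {ι : Type*} (s : Finset ι)
    (a b : ι → ℕ) (hpos : ∀ j ∈ s, 0 < a j + b j) :
    (∏ j ∈ s, (1 + X ^ a j * (X + 1) ^ b j : R[X])).natDegree =
      ∑ j ∈ s, a j + ∑ j ∈ s, b j := by
  rw [natDegree_prod_of_monic _ _ fun j hj => monic_one_add_X_pow_mul_X_add_one_pow (hpos j hj),
    ← sum_add_distrib]
  exact sum_congr rfl fun j hj => natDegree_one_add_X_pow_mul_X_add_one_pow (hpos j hj)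

end XPowMulXAddOnePow

theorem sigmaPow_succ (P : (ZMod 2)[X]) (n : ℕ) :
    sigmaPow P (n + 1) = sigmaPow P n + P ^ (n + 1) :=
  sum_range_succ _ _

theorem sigmaPow_one_add (T : (ZMod 2)[X]) (n : ℕ) :
    sigmaPow (1 + T) n =
      ∑ j ∈ range (n + 1), ((n + 1).choose (j + 1) : (ZMod 2)[X]) * T ^ j := by
  rcases eq_or_ne T 0 with rfl | hT
  · simp [sigmaPow, sum_range_succ']
  refine mul_left_cancel₀ hT ?_
  have hgeom : T * sigmaPow (1 + T) n = (1 + T) ^ (n + 1) - 1 := by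
    simpa [sigmaPow, mul_comm] using geom_sum_mul (1 + T) (n + 1)
  rw [hgeom, add_comm, add_pow, sum_range_succ', mul_sum]
  simp only [one_pow, mul_one, pow_zero, Nat.choose_zero_right, Nat.cast_one, add_sub_cancel_right]
  exact sum_congr rfl fun j _ => by ring

theorem natDegree_sigmaPow {P : (ZMod 2)[X]} (hP : 0 < P.natDegree) (n : ℕ) :
    (sigmaPow P n).natDegree = n * P.natDegree := by
  induction n with
  | zero => simp [sigmaPow]
  | succ n ih =>
    have hlt : (sigmaPow P n).natDegree < (P ^ (n + 1)).natDegree := by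
      rw [ih, natDegree_pow]
      exact Nat.mul_lt_mul_of_pos_right (Nat.lt_succ_self n) hP
    rw [sigmaPow_succ, natDegree_add_eq_right_of_natDegree_lt hlt, natDegree_pow]

theorem coeff_sigmaPow_one_add_of_lt (T : (ZMod 2)[X]) (k : ℕ) {i : ℕ}
    (hi : k * T.natDegree < i) :
    (sigmaPow (1 + T) (k + 2)).coeff i =
      (T ^ (k + 2)).coeff i + ((k + 3 : ℕ) : ZMod 2) * (T ^ (k + 1)).coeff i := by
  have hlow : ∀ j ∈ range (k + 1),
      (((k + 3).choose (j + 1) : (ZMod 2)[X]) * T ^ j).coeff i = 0 := by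
    intro j hj
    rw [coeff_natCast_mul, coeff_eq_zero_of_natDegree_lt, mul_zero]
    calc (T ^ j).natDegree ≤ j * T.natDegree := natDegree_pow_le
      _ ≤ k * T.natDegree := Nat.mul_le_mul_right _ (Nat.lt_succ_iff.mp (mem_range.mp hj))
      _ < i := hi
  rw [sigmaPow_one_add, sum_range_succ, sum_range_succ, coeff_add, coeff_add, finsetSum_coeff,
    sum_eq_zero hlow, zero_add, coeff_natCast_mul, coeff_natCast_mul, Nat.choose_self,
    Nat.choose_succ_self_right, Nat.cast_one, one_mul, add_comm]

theorem coeff_sigmaPow_one_add_X_pow_mul_X_add_one_pow {a b n l : ℕ} (hab : 0 < a + b)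
    (hn : 2 ≤ n) (hl : l ≤ a + b) :
    (sigmaPow (1 + X ^ a * (X + 1) ^ b) n).coeff (n * (a + b) - l) =
      ((n * b).choose l : ZMod 2) + ((n + 1 : ℕ) : ZMod 2) * if l = a + b then 1 else 0 := by
  obtain ⟨k, rfl⟩ : ∃ k, n = k + 2 := ⟨n - 2, by omega⟩
  set T : (ZMod 2)[X] := X ^ a * (X + 1) ^ b with hT
  have hTdeg : T.natDegree = a + b := natDegree_X_pow_mul_X_add_one_pow a b
  have hsplit : (k + 2) * (a + b) = k * (a + b) + (a + b) + (a + b) := by ring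
  have htop : (T ^ (k + 2)).coeff ((k + 2) * (a + b) - l) = (((k + 2) * b).choose l : ZMod 2) := by
    rw [hT, mul_pow, ← pow_mul, ← pow_mul, mul_comm a, mul_comm b, mul_add,
      coeff_X_pow_mul_X_add_one_pow_add_sub]
    rw [← mul_add]; omega
  have hnext : (T ^ (k + 1)).coeff ((k + 2) * (a + b) - l) = if l = a + b then 1 else 0 := by
    have hTk : (T ^ (k + 1)).natDegree = k * (a + b) + (a + b) := by
      rw [natDegree_pow, hTdeg]; ring
    split_ifs with hla
    · rw [show (k + 2) * (a + b) - l = (T ^ (k + 1)).natDegree by omega,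
        ((monic_X_pow_mul_X_add_one_pow a b).pow (k + 1)).coeff_natDegree]
    · exact coeff_eq_zero_of_natDegree_lt (by omega)
  rw [coeff_sigmaPow_one_add_of_lt T k (by rw [hTdeg]; omega), htop, hnext]

theorem coeff_X_pow_mul_X_add_one_pow_add_sigmaPow_add_one_of_odd {a b h u v l : ℕ}
    (hh : 1 ≤ h) (hab : 0 < a + b) (huv : u + v = 2 * h * (a + b)) (hv : Even v)
    (hl : l ≤ a + b) (hlodd : Odd l) :
    (X ^ u * (X + 1) ^ v + sigmaPow (1 + X ^ a * (X + 1) ^ b) (2 * h) + 1 : (ZMod 2)[X]).coeff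
      (2 * h * (a + b) - l) = if l = a + b then 1 else 0 := by
  have hD : 2 * (a + b) ≤ 2 * h * (a + b) := Nat.mul_le_mul_right _ (by omega)
  have hpos : 2 * h * (a + b) - l ≠ 0 := by omega
  rw [coeff_add, coeff_add, ← huv, coeff_X_pow_mul_X_add_one_pow_add_sub _ _ _ (by omega), huv,
    coeff_sigmaPow_one_add_X_pow_mul_X_add_one_pow hab (by omega) hl, coeff_one, if_neg hpos,
    (ZMod.natCast_eq_zero_iff_even).mpr (Nat.even_choose_of_even_of_odd hv hlodd),
    (ZMod.natCast_eq_zero_iff_even).mpr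
      (Nat.even_choose_of_even_of_odd ((even_two_mul h).mul_right b) hlodd),
    (ZMod.natCast_eq_one_iff_odd).mpr (even_two_mul h).add_one]
  simp

theorem even_sub_natDegree_of_lt {W : (ZMod 2)[X]} (hW : W ≠ 0) {D d : ℕ}
    (hWD : W.natDegree ≤ D)
    (hcoeff : ∀ l ≤ d, Odd l → W.coeff (D - l) = if l = d then 1 else 0)
    (hlt : D - W.natDegree < d) : Even (D - W.natDegree) := by
  have hlead : W.coeff W.natDegree = 1 := by
    have hunit : ∀ x : ZMod 2, x ≠ 0 → x = 1 := by decide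
    exact hunit _ (leadingCoeff_ne_zero.mpr hW)
  by_contra hodd
  have h := hcoeff _ hlt.le (Nat.not_even_iff_odd.mp hodd)
  rw [if_neg hlt.ne, Nat.sub_sub_self hWD, hlead] at h
  exact one_ne_zero h

theorem odd_sub_natDegree_of_eq_add_one {W : (ZMod 2)[X]} {D d : ℕ}
    (hcoeff : ∀ l ≤ d, Odd l → W.coeff (D - l) = if l = d then 1 else 0)
    (heq : D - W.natDegree = d + 1) : Odd (D - W.natDegree) := by
  rw [heq, Nat.odd_add_one, Nat.not_odd_iff_even]
  by_contra hodd
  have h := hcoeff d le_rfl (Nat.not_even_iff_odd.mp hodd)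
  rw [if_pos rfl, coeff_eq_zero_of_natDegree_lt (by omega)] at h
  exact zero_ne_one h

theorem stmt_8_general
    (h a b : ℕ) (hh : 2 ≤ h)
    (hab5 : 5 ≤ a + b)
    (M : Polynomial (ZMod 2)) (hM : M = 1 + X ^ a * (X + 1) ^ b)
    (J : Finset ℕ) (aj bj : ℕ → ℕ)
    (haj : ∀ j ∈ J, 1 ≤ aj j)
    (hfact : sigmaPow M (2 * h) = ∏ j ∈ J, (1 + X ^ aj j * (X + 1) ^ bj j))
    (u v : ℕ) (hu : u = ∑ j ∈ J, aj j) (hv : v = ∑ j ∈ J, bj j)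
    (hveven : Even v)
    (U W : Polynomial (ZMod 2)) (c : ℕ)
    (hU : U = X ^ u * (X + 1) ^ v)
    (hW : W = U + sigmaPow M (2 * h) + 1)
    (hc : c = 2 * h * (a + b) - W.natDegree)
    (hW0 : W ≠ 0) (m : ℕ) (hmodd : Odd m) :
    (c = a + b + 1 → Odd c) ∧
    (c + m = a + b → Even c) ∧
    (c + m = a + b + 1 → 3 ≤ m → Even c) := by
  have hab : 0 < a + b := lt_of_lt_of_le (by norm_num) hab5
  have hMdeg : M.natDegree = a + b := hM ▸ natDegree_one_add_X_pow_mul_X_add_one_pow hab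
  have hσdeg : (sigmaPow M (2 * h)).natDegree = 2 * h * (a + b) := by
    rw [natDegree_sigmaPow (hMdeg ▸ hab), hMdeg]
  have huv : u + v = 2 * h * (a + b) := by
    rw [hu, hv, ← natDegree_prod_one_add_X_pow_mul_X_add_one_pow (R := ZMod 2) J aj bj
      fun j hj => Nat.add_pos_left (haj j hj) _, ← hfact, hσdeg]
  have hWD : W.natDegree ≤ 2 * h * (a + b) := by
    rw [hW, hU]
    refine natDegree_add_le_of_degree_le (natDegree_add_le_of_degree_le ?_ hσdeg.le) (by simp)
    rw [natDegree_X_pow_mul_X_add_one_pow, huv]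
  have hcoeff (l : ℕ) (hl : l ≤ a + b) (hlodd : Odd l) :
      W.coeff (2 * h * (a + b) - l) = if l = a + b then 1 else 0 := by
    rw [hW, hU, hM]
    exact coeff_X_pow_mul_X_add_one_pow_add_sigmaPow_add_one_of_odd (by omega) hab huv hveven
      hl hlodd
  rw [hc]
  refine ⟨odd_sub_natDegree_of_eq_add_one hcoeff, fun hcm => ?_, fun hcm _ => ?_⟩ <;>
    exact even_sub_natDegree_of_lt hW0 hWD hcoeff (by have := hmodd.pos; omega)

theorem stmt_8
    (h a b : ℕ) (hh : 2 ≤ h) (hp : Nat.Prime (2 * h + 1))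
    (ha : 1 ≤ a) (hb : 1 ≤ b) (hab5 : 5 ≤ a + b)
    (M : Polynomial (ZMod 2)) (hM : M = 1 + X ^ a * (X + 1) ^ b)
    (hMirr : Irreducible M)
    (J : Finset ℕ) (aj bj : ℕ → ℕ)
    (haj : ∀ j ∈ J, 1 ≤ aj j) (hbj : ∀ j ∈ J, 1 ≤ bj j)
    (hMjirr : ∀ j ∈ J, Irreducible (1 + X ^ aj j * (X + 1) ^ bj j : Polynomial (ZMod 2)))
    (hdistinct : ∀ i ∈ J, ∀ j ∈ J, i ≠ j →
      (1 + X ^ aj i * (X + 1) ^ bj i : Polynomial (ZMod 2)) ≠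
        1 + X ^ aj j * (X + 1) ^ bj j)
    (hfact : sigmaPow M (2 * h) = ∏ j ∈ J, (1 + X ^ aj j * (X + 1) ^ bj j))
    (u v : ℕ) (hu : u = ∑ j ∈ J, aj j) (hv : v = ∑ j ∈ J, bj j)
    (hueven : Even u) (hveven : Even v)
    (U W R : Polynomial (ZMod 2)) (c : ℕ)
    (hU : U = X ^ u * (X + 1) ^ v)
    (hW : W = U + sigmaPow M (2 * h) + 1)
    (hc : c = 2 * h * (a + b) - W.natDegree)
    (hR : R = sigmaPow M (2 * h - 1) + W)
    (hW0 : W ≠ 0) (m : ℕ) (hmodd : Odd m) (hmpos : 0 < m) :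
    (c = a + b + 1 → Odd c) ∧
    (c + m = a + b → Even c) ∧
    (c + m = a + b + 1 → 3 ≤ m → Even c) :=
  stmt_8_general h a b hh hab5 M hM J aj bj haj hfact u v hu hv hveven U W c hU hW hc hW0 m hmodd
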